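/- arXiv:1204.1180 — 3 statements merged into one kernel-verified Lean document; each statement's English description precedes it below -/
import Mathlib

section
/- Let d ≥ 1 be an integer, α > 0 with d > min(α,2) =: m, and ρ > 0. There exist ρ' ∈ (0, min(ρ,2)) and C < ∞, depending only on d, α and ρ (not on L, C₁, C₂, C₃), with the following property. Let L ≥ 1, C₁, C₂, C₃ ≥ 0, let f(x) = C₁⟨x⟩_L^{m−d}, and let g : ℤ^d → ℝ be ℤ^d-symmetric with |g(x)| ≤ C₂·δ_{o,x} + C₃·⟨x⟩_L^{−d−ρ} for all x (so g is absolutely summable). Then for every x ∈ ℤ^d: |(f*g)(x) − (∑_{y∈ℤ^d} g(y))·f(x)| ≤ C·C₁·C₃·⟨x⟩_L^{m−d−ρ'}. -/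
open scoped BigOperators ENNReal

noncomputable section

namespace LongRange

abbrev V (d : ℕ) : Type := Fin d → ℤ

variable {d : ℕ}

def nrm (x : V d) : ℝ := Real.sqrt (∑ i, ((x i : ℝ)) ^ 2)

def bkt (L : ℝ) (x : V d) : ℝ := max (nrm x) L

def kdelta (x : V d) : ℝ := if x = 0 then 1 else 0

/-- `g` is invariant under reflections in coordinate hyperplanes and
permutations of the coordinates. -/
def ZdSymm (g : V d → ℝ) : Prop :=
  (∀ (s : Fin d → Bool) (x : V d), g (fun i => if s i then -(x i) else x i) = g x) ∧
  (∀ (e : Equiv.Perm (Fin d)) (x : V d), g (fun i => x (e i)) = g x)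

end LongRange

/-!
Write the defect as a single sum: `(f * g)(x) - (∑ g) f(x) = ∑_y (f y - f x) g (x - y)`, and put
`X = ⟨x⟩_L`, `Y = ⟨y⟩_L`, `W = ⟨x - y⟩_L`, `a = m - d ≤ 0`, `ρ' = min 1 (ρ / 2)`.
Where `|x - y| ≤ X / 2`, the mean value theorem gives `|Y^a - X^a| ≲ X^(a-1) |x - y|`, and
`|x - y| W^(-d-ρ) ≤ X^(1-ρ') W^(-d-ρ/2)`. Elsewhere `W ≥ X / 2`, so half of the decay of `g`
can be traded for `X^(-ρ/2)`; the term `Y^a` is handled through `Y^a ≤ X^(d+a+ρ/2) Y^(-d-ρ/2)`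
when `Y ≤ X`. In both regions the summand is `≲ X^(a-ρ') (W^(-d-ρ/2) + Y^(-d-ρ/2))`, whose sum
over `y ∈ ℤ^d` is bounded uniformly in `L ≥ 1` because `ℤ^d` is a lattice of rank `d`.
-/

section RpowEstimates

open Real

variable {a s ρ ρ' m r X Y W : ℝ}

lemma abs_rpow_sub_rpow_le (ha : a ≤ 0) (hm : 0 < m) (hX : m ≤ X) (hY : m ≤ Y) :
    |Y ^ a - X ^ a| ≤ -a * m ^ (a - 1) * |Y - X| := by
  have hpos : ∀ u ∈ Set.Ici m, 0 < u := fun u hu => hm.trans_le hu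
  refine (convex_Ici m).norm_image_sub_le_of_norm_deriv_le
    (fun u hu => differentiableAt_rpow_const_of_ne a (hpos u hu).ne') (fun u hu => ?_) hX hY
  rw [Real.deriv_rpow_const, norm_mul, Real.norm_eq_abs, abs_of_nonpos ha, Real.norm_eq_abs,
    abs_of_pos (rpow_pos_of_pos (hpos u hu) _)]
  exact mul_le_mul_of_nonneg_left (rpow_le_rpow_of_nonpos hm hu (by linarith)) (neg_nonneg.2 ha)

lemma mul_rpow_le_rpow_mul_rpow (hr : 0 ≤ r) (hrX : r ≤ X) (hrW : r ≤ W) (hW : 1 ≤ W)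
    (hρ'0 : 0 ≤ ρ') (hρ'1 : ρ' ≤ 1) (hρ'ρ : ρ' ≤ ρ / 2) :
    r * W ^ (-s - ρ) ≤ X ^ (1 - ρ') * W ^ (-s - ρ / 2) := by
  have hW0 : 0 < W := one_pos.trans_le hW
  calc r * W ^ (-s - ρ) = r ^ (1 - ρ') * (r ^ ρ' * W ^ (-s - ρ)) := by
        rw [← mul_assoc, ← rpow_add' hr (by norm_num), sub_add_cancel, rpow_one]
    _ ≤ X ^ (1 - ρ') * (W ^ ρ' * W ^ (-s - ρ)) :=
        mul_le_mul (rpow_le_rpow hr hrX (by linarith))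
          (mul_le_mul_of_nonneg_right (rpow_le_rpow hr hrW hρ'0) (rpow_nonneg hW0.le _))
          (by positivity) (rpow_nonneg (hr.trans hrX) _)
    _ ≤ X ^ (1 - ρ') * W ^ (-s - ρ / 2) := by
        rw [← rpow_add hW0]
        exact mul_le_mul_of_nonneg_left (rpow_le_rpow_of_exponent_le hW (by linarith))
          (rpow_nonneg (hr.trans hrX) _)

lemma div_two_rpow (hX : 0 ≤ X) (c : ℝ) : (X / 2) ^ c = 2 ^ (-c) * X ^ c := by
  rw [div_rpow hX zero_le_two, div_eq_mul_inv, ← rpow_neg zero_le_two, mul_comm]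

lemma abs_rpow_sub_rpow_mul_rpow_le_of_le_half (ha : a ≤ 0) (hX : 1 ≤ X) (hW : 1 ≤ W)
    (hYX : |Y - X| ≤ r) (hrW : r ≤ W) (hrX : r ≤ X / 2) (hρ'0 : 0 ≤ ρ') (hρ'1 : ρ' ≤ 1) (hρ'ρ : ρ' ≤ ρ / 2) :
    |Y ^ a - X ^ a| * W ^ (-s - ρ) ≤ -a * 2 ^ (1 - a) * X ^ (a - ρ') * W ^ (-s - ρ / 2) := by
  have hX0 : 0 < X := one_pos.trans_le hX
  have hY : X / 2 ≤ Y := by linarith [(abs_le.1 (hYX.trans hrX)).1]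
  have hr : 0 ≤ r := (abs_nonneg _).trans hYX
  have hc : 0 ≤ -a * (X / 2) ^ (a - 1) := mul_nonneg (neg_nonneg.2 ha) (by positivity)
  have hdiff : |Y ^ a - X ^ a| ≤ -a * (X / 2) ^ (a - 1) * r :=
    (abs_rpow_sub_rpow_le ha (half_pos hX0) (half_le_self hX0.le) hY).trans
      (mul_le_mul_of_nonneg_left hYX hc)
  calc |Y ^ a - X ^ a| * W ^ (-s - ρ) ≤ -a * (X / 2) ^ (a - 1) * (r * W ^ (-s - ρ)) := by
        rw [← mul_assoc]
        exact mul_le_mul_of_nonneg_right hdiff (by positivity)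
    _ ≤ -a * (X / 2) ^ (a - 1) * (X ^ (1 - ρ') * W ^ (-s - ρ / 2)) :=
        mul_le_mul_of_nonneg_left (mul_rpow_le_rpow_mul_rpow hr
          (hrX.trans (half_le_self hX0.le)) hrW hW hρ'0 hρ'1 hρ'ρ) hc
    _ = -a * 2 ^ (1 - a) * X ^ (a - ρ') * W ^ (-s - ρ / 2) := by
        rw [div_two_rpow hX0.le, neg_sub, show a - ρ' = (a - 1) + (1 - ρ') by ring,
          rpow_add hX0]
        ring

lemma rpow_le_of_half_le (hX : 0 < X) (hXW : X / 2 ≤ W) {c : ℝ} (hc : c ≤ 0) :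
    W ^ c ≤ 2 ^ (-c) * X ^ c :=
  div_two_rpow hX.le c ▸ rpow_le_rpow_of_nonpos (half_pos hX) hXW hc

lemma rpow_mul_rpow_le_of_half_le (hX : 1 ≤ X) (hXW : X / 2 ≤ W) (hρ : 0 ≤ ρ)
    (hρ'ρ : ρ' ≤ ρ / 2) :
    X ^ a * W ^ (-s - ρ) ≤ 2 ^ (ρ / 2) * X ^ (a - ρ') * W ^ (-s - ρ / 2) := by
  have hX0 : 0 < X := one_pos.trans_le hX
  have hW0 : 0 < W := (half_pos hX0).trans_le hXW
  have hWρ := rpow_le_of_half_le hX0 hXW (c := -(ρ / 2)) (by linarith)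
  rw [neg_neg] at hWρ
  calc X ^ a * W ^ (-s - ρ) = X ^ a * W ^ (-(ρ / 2)) * W ^ (-s - ρ / 2) := by
        rw [mul_assoc, ← rpow_add hW0]
        ring_nf
    _ ≤ X ^ a * (2 ^ (ρ / 2) * X ^ (-(ρ / 2))) * W ^ (-s - ρ / 2) := by gcongr
    _ = 2 ^ (ρ / 2) * X ^ (a - ρ / 2) * W ^ (-s - ρ / 2) := by
        rw [sub_eq_add_neg a, rpow_add hX0]
        ring
    _ ≤ 2 ^ (ρ / 2) * X ^ (a - ρ') * W ^ (-s - ρ / 2) := by gcongr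

lemma rpow_mul_rpow_le_of_le_of_half_le (ha : a ≤ 0) (hsa : 0 ≤ s + a) (hY : 0 < Y)
    (hYX : Y ≤ X) (hX : 1 ≤ X) (hXW : X / 2 ≤ W) (hρ : 0 ≤ ρ) (hρ'ρ : ρ' ≤ ρ / 2) :
    Y ^ a * W ^ (-s - ρ) ≤ 2 ^ (s + ρ) * X ^ (a - ρ') * Y ^ (-s - ρ / 2) := by
  have hX0 : 0 < X := one_pos.trans_le hX
  have hW0 : 0 < W := (half_pos hX0).trans_le hXW
  have hWs := rpow_le_of_half_le hX0 hXW (c := -s - ρ) (by linarith)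
  rw [neg_sub, sub_neg_eq_add, add_comm ρ] at hWs
  calc Y ^ a * W ^ (-s - ρ) = Y ^ (s + a + ρ / 2) * W ^ (-s - ρ) * Y ^ (-s - ρ / 2) := by
        rw [mul_right_comm, ← rpow_add hY]
        ring_nf
    _ ≤ X ^ (s + a + ρ / 2) * (2 ^ (s + ρ) * X ^ (-s - ρ)) * Y ^ (-s - ρ / 2) := by gcongr
    _ = 2 ^ (s + ρ) * X ^ (a - ρ / 2) * Y ^ (-s - ρ / 2) := by
        rw [mul_left_comm, ← rpow_add hX0]
        ring_nf
    _ ≤ 2 ^ (s + ρ) * X ^ (a - ρ') * Y ^ (-s - ρ / 2) := by gcongr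

lemma abs_rpow_sub_rpow_mul_rpow_le_of_half_le (ha : a ≤ 0) (hsa : 0 ≤ s + a) (hX : 1 ≤ X)
    (hY : 0 < Y) (hXW : X / 2 ≤ W) (hρ : 0 ≤ ρ) (hρ'ρ : ρ' ≤ ρ / 2) :
    |Y ^ a - X ^ a| * W ^ (-s - ρ) ≤
      (2 ^ (ρ / 2) + 2 ^ (s + ρ)) * X ^ (a - ρ') * (W ^ (-s - ρ / 2) + Y ^ (-s - ρ / 2)) := by
  have hX0 : 0 < X := one_pos.trans_le hX
  have hW0 : 0 < W := (half_pos hX0).trans_le hXW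
  have hXa := rpow_mul_rpow_le_of_half_le (a := a) (s := s) hX hXW hρ hρ'ρ
  have hYa : Y ^ a * W ^ (-s - ρ) ≤
      2 ^ (s + ρ) * X ^ (a - ρ') * (W ^ (-s - ρ / 2) + Y ^ (-s - ρ / 2)) := by
    rcases le_total Y X with hYX | hXY
    · have := rpow_mul_rpow_le_of_le_of_half_le ha hsa hY hYX hX hXW hρ hρ'ρ
      have : 0 ≤ 2 ^ (s + ρ) * X ^ (a - ρ') * W ^ (-s - ρ / 2) := by positivity
      linarith
    · have h2 : (2 : ℝ) ^ (ρ / 2) ≤ 2 ^ (s + ρ) := by gcongr <;> linarith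
      calc Y ^ a * W ^ (-s - ρ) ≤ X ^ a * W ^ (-s - ρ) :=
            mul_le_mul_of_nonneg_right (rpow_le_rpow_of_nonpos hX0 hXY ha) (by positivity)
        _ ≤ 2 ^ (s + ρ) * X ^ (a - ρ') * W ^ (-s - ρ / 2) := hXa.trans (by gcongr)
        _ ≤ _ := by
            gcongr
            exact le_add_of_nonneg_right (by positivity)
  calc |Y ^ a - X ^ a| * W ^ (-s - ρ) ≤ (Y ^ a + X ^ a) * W ^ (-s - ρ) := by
        gcongr
        refine (abs_sub _ _).trans_eq ?_
        rw [abs_of_pos (rpow_pos_of_pos hY _), abs_of_pos (rpow_pos_of_pos hX0 _)]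
    _ ≤ _ := by
      have : 0 ≤ 2 ^ (ρ / 2) * X ^ (a - ρ') * Y ^ (-s - ρ / 2) := by positivity
      nlinarith

lemma abs_rpow_sub_rpow_mul_rpow_le (ha : a ≤ 0) (hsa : 0 ≤ s + a) (hX : 1 ≤ X) (hY : 0 < Y)
    (hW : 1 ≤ W) (hYX : |Y - X| ≤ r) (hrW : r ≤ W) (hρ : 0 ≤ ρ) (hρ'0 : 0 ≤ ρ') (hρ'1 : ρ' ≤ 1)
    (hρ'ρ : ρ' ≤ ρ / 2) :
    |Y ^ a - X ^ a| * W ^ (-s - ρ) ≤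
      (-a * 2 ^ (1 - a) + 2 ^ (ρ / 2) + 2 ^ (s + ρ)) * X ^ (a - ρ') *
        (W ^ (-s - ρ / 2) + Y ^ (-s - ρ / 2)) := by
  have hX0 : 0 < X := one_pos.trans_le hX
  have hW0 : 0 < W := one_pos.trans_le hW
  have hnear : 0 ≤ -a * 2 ^ (1 - a) * X ^ (a - ρ') * W ^ (-s - ρ / 2) :=
    mul_nonneg (mul_nonneg (mul_nonneg (neg_nonneg.2 ha) (by positivity)) (by positivity))
      (by positivity)
  have hfar : 0 ≤ (2 ^ (ρ / 2) + 2 ^ (s + ρ)) * X ^ (a - ρ') *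
      (W ^ (-s - ρ / 2) + Y ^ (-s - ρ / 2)) := by positivity
  have hY' : 0 ≤ -a * 2 ^ (1 - a) * X ^ (a - ρ') * Y ^ (-s - ρ / 2) :=
    mul_nonneg (mul_nonneg (mul_nonneg (neg_nonneg.2 ha) (by positivity)) (by positivity))
      (by positivity)
  rcases le_total r (X / 2) with hrX | hXr
  · have := abs_rpow_sub_rpow_mul_rpow_le_of_le_half (s := s) ha hX hW hYX hrW hrX hρ'0 hρ'1 hρ'ρ
    nlinarith
  · have := abs_rpow_sub_rpow_mul_rpow_le_of_half_le (ρ' := ρ') ha hsa hX hY (hXr.trans hrW) hρ hρ'ρ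
    nlinarith

end RpowEstimates

lemma tsum_mul_sub_tsum_mul_eq {G : Type*} [AddCommGroup G] {f g : G → ℝ} {M : ℝ}
    (hf : ∀ y, |f y| ≤ M) (hg : Summable g) (x : G) :
    ∑' y, f y * g (x - y) - (∑' y, g y) * f x = ∑' y, (f y - f x) * g (x - y) := by
  have hgx : Summable fun y => g (x - y) := (Equiv.subLeft x).summable_iff.2 hg
  have hfg : Summable fun y => f y * g (x - y) :=
    Summable.of_norm_bounded (hgx.abs.mul_left M) fun y => by
      rw [Real.norm_eq_abs, abs_mul]
      exact mul_le_mul_of_nonneg_right (hf y) (abs_nonneg _)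
  have hshift : ∑' y, g y = ∑' y, g (x - y) := ((Equiv.subLeft x).tsum_eq g).symm
  rw [hshift, ← tsum_mul_right, ← hfg.tsum_sub (hgx.mul_right _)]
  simp only [sub_mul, mul_comm (g _)]

namespace LongRange

variable {d : ℕ}

def toEuclidean (x : V d) : EuclideanSpace ℝ (Fin d) := WithLp.toLp 2 fun i => (x i : ℝ)

lemma toEuclidean_sub (x y : V d) : toEuclidean (x - y) = toEuclidean x - toEuclidean y := by
  ext i
  simp [toEuclidean]

lemma toEuclidean_eq_zero {x : V d} : toEuclidean x = 0 ↔ x = 0 := by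
  simp [toEuclidean, funext_iff, WithLp.ext_iff]

lemma nrm_eq_norm_toEuclidean (x : V d) : nrm x = ‖toEuclidean x‖ := by
  simp [nrm, toEuclidean, EuclideanSpace.norm_eq]

lemma nrm_le_bkt (L : ℝ) (x : V d) : nrm x ≤ bkt L x := le_max_left _ _

lemma one_le_bkt {L : ℝ} (hL : 1 ≤ L) (x : V d) : 1 ≤ bkt L x := hL.trans (le_max_right _ _)

lemma abs_bkt_sub_bkt_le (L : ℝ) (x y : V d) : |bkt L y - bkt L x| ≤ nrm (x - y) := by
  refine (abs_max_sub_max_le_abs _ _ _).trans ?_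
  rw [nrm_eq_norm_toEuclidean, nrm_eq_norm_toEuclidean, nrm_eq_norm_toEuclidean, toEuclidean_sub,
    norm_sub_rev]
  exact abs_norm_sub_norm_le _ _

open Module Submodule in
lemma summable_norm_toEuclidean_rpow {r : ℝ} (hr : r < -(d : ℝ)) :
    Summable fun z : V d => ‖toEuclidean z‖ ^ r := by
  let b := (EuclideanSpace.basisFun (Fin d) ℝ).toBasis
  have hrank : finrank ℤ (span ℤ (Set.range b)) = d := by
    rw [ZLattice.rank ℝ]
    simp
  have hs := ZLattice.summable_norm_rpow (span ℤ (Set.range b)) r (by rwa [hrank])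
  refine (hs.comp_injective (b.restrictScalars ℤ).equivFun.symm.injective).congr fun z => ?_
  have hz : ((b.restrictScalars ℤ).equivFun.symm z : EuclideanSpace ℝ (Fin d)) = toEuclidean z := by
    ext i
    have := Basis.restrictScalars_repr_apply ℤ b ((b.restrictScalars ℤ).equivFun.symm z) i
    rw [← Basis.equivFun_apply, LinearEquiv.apply_symm_apply] at this
    simpa [b, toEuclidean] using this.symm
  rw [← hz]
  rfl

lemma summable_bkt_rpow (L : ℝ) {r : ℝ} (hr : r < -(d : ℝ)) :
    Summable fun z : V d => bkt L z ^ r := by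
  refine (summable_norm_toEuclidean_rpow hr).of_norm_bounded_eventually ?_
  filter_upwards [Filter.eventually_cofinite_ne 0] with z hz
  have hpos : 0 < nrm z := by
    rw [nrm_eq_norm_toEuclidean, norm_pos_iff, Ne, toEuclidean_eq_zero]
    exact hz
  rw [Real.norm_of_nonneg (Real.rpow_nonneg (hpos.le.trans (nrm_le_bkt L z)) _),
    ← nrm_eq_norm_toEuclidean]
  exact Real.rpow_le_rpow_of_nonpos hpos (nrm_le_bkt L z)
    (by linarith [(d.cast_nonneg : (0 : ℝ) ≤ d)])

lemma tsum_bkt_rpow_le {L r : ℝ} (hL : 1 ≤ L) (hr : r < -(d : ℝ)) :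
    ∑' z : V d, bkt L z ^ r ≤ ∑' z : V d, bkt 1 z ^ r :=
  (summable_bkt_rpow L hr).tsum_le_tsum (fun z =>
    Real.rpow_le_rpow_of_nonpos (zero_lt_one.trans_le (one_le_bkt le_rfl z))
      (max_le_max le_rfl hL) (by linarith [(d.cast_nonneg : (0 : ℝ) ≤ d)]))
    (summable_bkt_rpow 1 hr)

lemma summable_kdelta : Summable (kdelta : V d → ℝ) :=
  summable_of_ne_finset_zero (s := {0}) fun z hz => by
    simp [kdelta, Finset.notMem_singleton.1 hz]

lemma abs_sub_mul_le_of_abs_le {φ g w : V d → ℝ} {C₂ C₃ : ℝ}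
    (hg : ∀ z, |g z| ≤ C₂ * kdelta z + C₃ * w z) (x y : V d) :
    |(φ y - φ x) * g (x - y)| ≤ |φ y - φ x| * (C₃ * w (x - y)) := by
  by_cases hxy : y = x
  · simp [hxy]
  · rw [abs_mul]
    gcongr
    simpa [kdelta, sub_ne_zero.2 (Ne.symm hxy)] using hg (x - y)

theorem abs_tsum_conv_sub_tsum_mul_le {L a ρ ρ' C₁ C₂ C₃ : ℝ} {g : V d → ℝ} (hL : 1 ≤ L)
    (ha : a ≤ 0) (hda : 0 ≤ d + a) (hρ : 0 < ρ) (hρ'0 : 0 ≤ ρ') (hρ'1 : ρ' ≤ 1)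
    (hρ'ρ : ρ' ≤ ρ / 2) (hC₁ : 0 ≤ C₁) (hC₃ : 0 ≤ C₃)
    (hg : ∀ z, |g z| ≤ C₂ * kdelta z + C₃ * bkt L z ^ (-(d : ℝ) - ρ)) (x : V d) :
    |(∑' y : V d, (C₁ * bkt L y ^ a) * g (x - y)) - (∑' y : V d, g y) * (C₁ * bkt L x ^ a)| ≤
      2 * (-a * 2 ^ (1 - a) + 2 ^ (ρ / 2) + 2 ^ ((d : ℝ) + ρ)) *
        (∑' z : V d, bkt 1 z ^ (-(d : ℝ) - ρ / 2)) * C₁ * C₃ * bkt L x ^ (a - ρ') := by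
  set c := -a * 2 ^ (1 - a) + 2 ^ (ρ / 2) + 2 ^ ((d : ℝ) + ρ)
  set X := bkt L x
  have hX : 1 ≤ X := one_le_bkt hL x
  have hdecay : -(d : ℝ) - ρ / 2 < -d := by linarith
  have hc : 0 ≤ c := add_nonneg (add_nonneg (mul_nonneg (neg_nonneg.2 ha) (by positivity))
    (by positivity)) (by positivity)
  have hgs : Summable g :=
    Summable.of_norm_bounded ((summable_kdelta.mul_left C₂).add
      ((summable_bkt_rpow L (by linarith : -(d : ℝ) - ρ < -d)).mul_left C₃)) hg
  have hF : ∀ y : V d, |C₁ * bkt L y ^ a| ≤ C₁ := fun y => by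
    rw [abs_of_nonneg (mul_nonneg hC₁ (Real.rpow_nonneg (zero_le_one.trans (one_le_bkt hL y)) _))]
    exact mul_le_of_le_one_right hC₁ (Real.rpow_le_one_of_one_le_of_nonpos (one_le_bkt hL y) ha)
  set S := ∑' z : V d, bkt L z ^ (-(d : ℝ) - ρ / 2)
  have hS : HasSum (fun y => bkt L (x - y) ^ (-(d : ℝ) - ρ / 2) + bkt L y ^ (-(d : ℝ) - ρ / 2))
      (S + S) := by
    have h := (summable_bkt_rpow L hdecay).hasSum
    exact ((Equiv.subLeft x).hasSum_iff.2 h).add h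
  rw [tsum_mul_sub_tsum_mul_eq hF hgs x]
  refine (tsum_of_norm_bounded (hS.mul_left (C₁ * C₃ * c * X ^ (a - ρ')))
    (f := fun y => (C₁ * bkt L y ^ a - C₁ * X ^ a) * g (x - y)) fun y => ?_).trans ?_
  · have hY : 0 < bkt L y := zero_lt_one.trans_le (one_le_bkt hL y)
    have hpt := abs_rpow_sub_rpow_mul_rpow_le (ρ' := ρ') ha hda hX hY (one_le_bkt hL (x - y))
      (abs_bkt_sub_bkt_le L x y) (nrm_le_bkt L (x - y)) hρ.le hρ'0 hρ'1 hρ'ρ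
    rw [Real.norm_eq_abs]
    refine (abs_sub_mul_le_of_abs_le (φ := fun z => C₁ * bkt L z ^ a) hg x y).trans ?_
    rw [← mul_sub, abs_mul, abs_of_nonneg hC₁]
    calc C₁ * |bkt L y ^ a - X ^ a| * (C₃ * bkt L (x - y) ^ (-(d : ℝ) - ρ))
        = C₁ * C₃ * (|bkt L y ^ a - X ^ a| * bkt L (x - y) ^ (-(d : ℝ) - ρ)) := by ring
      _ ≤ C₁ * C₃ * (c * X ^ (a - ρ') *
          (bkt L (x - y) ^ (-(d : ℝ) - ρ / 2) + bkt L y ^ (-(d : ℝ) - ρ / 2))) := by gcongr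
      _ = _ := by ring
  · have hSK : S ≤ ∑' z : V d, bkt 1 z ^ (-(d : ℝ) - ρ / 2) := tsum_bkt_rpow_le hL hdecay
    have : 0 ≤ C₁ * C₃ * c * X ^ (a - ρ') := by positivity
    nlinarith

theorem statement14_general (d : ℕ) (α ρ : ℝ) (hα : 0 < α)
    (hdm : min α 2 < (d : ℝ)) (hρ : 0 < ρ) :
    ∃ ρ' C : ℝ, 0 < ρ' ∧ ρ' < min ρ 2 ∧ 0 ≤ C ∧
      ∀ L : ℝ, 1 ≤ L → ∀ C₁ C₂ C₃ : ℝ, 0 ≤ C₁ → 0 ≤ C₂ → 0 ≤ C₃ →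
        ∀ g : V d → ℝ, ZdSymm g →
          (∀ x : V d, |g x| ≤ C₂ * kdelta x + C₃ * bkt L x ^ (-(d : ℝ) - ρ)) →
          ∀ x : V d,
            |(∑' y : V d, (C₁ * bkt L y ^ (min α 2 - (d : ℝ))) * g (x - y)) -
                (∑' y : V d, g y) * (C₁ * bkt L x ^ (min α 2 - (d : ℝ)))| ≤
              C * C₁ * C₃ * bkt L x ^ (min α 2 - (d : ℝ) - ρ') := by
  set a := min α 2 - (d : ℝ)
  have hm : 0 < min α 2 := lt_min hα two_pos
  have ha : a ≤ 0 := by linarith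
  refine ⟨min 1 (ρ / 2), 2 * (-a * 2 ^ (1 - a) + 2 ^ (ρ / 2) + 2 ^ ((d : ℝ) + ρ)) *
      ∑' z : V d, bkt 1 z ^ (-(d : ℝ) - ρ / 2), lt_min one_pos (half_pos hρ),
    lt_min ((min_le_right _ _).trans_lt (half_lt_self hρ)) ((min_le_left _ _).trans_lt one_lt_two),
    ?_, ?_⟩
  · have hc : 0 ≤ -a * 2 ^ (1 - a) := mul_nonneg (neg_nonneg.2 ha) (by positivity)
    have hK : 0 ≤ ∑' z : V d, bkt 1 z ^ (-(d : ℝ) - ρ / 2) :=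
      tsum_nonneg fun z => Real.rpow_nonneg (zero_le_one.trans (one_le_bkt le_rfl z)) _
    positivity
  intro L hL C₁ C₂ C₃ hC₁ _ hC₃ g _ hg x
  exact abs_tsum_conv_sub_tsum_mul_le hL ha (by linarith) hρ (by positivity) (min_le_left _ _)
    (min_le_right _ _) hC₁ hC₃ hg x

/-- convolution of `C₁⟨·⟩_L^{m−d}` with a summable symmetric `g`. -/
theorem statement14 (d : ℕ) (hd : 1 ≤ d) (α ρ : ℝ) (hα : 0 < α)
    (hdm : min α 2 < (d : ℝ)) (hρ : 0 < ρ) :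
    ∃ ρ' C : ℝ, 0 < ρ' ∧ ρ' < min ρ 2 ∧ 0 ≤ C ∧
      ∀ L : ℝ, 1 ≤ L → ∀ C₁ C₂ C₃ : ℝ, 0 ≤ C₁ → 0 ≤ C₂ → 0 ≤ C₃ →
        ∀ g : V d → ℝ, ZdSymm g →
          (∀ x : V d, |g x| ≤ C₂ * kdelta x + C₃ * bkt L x ^ (-(d : ℝ) - ρ)) →
          ∀ x : V d,
            |(∑' y : V d, (C₁ * bkt L y ^ (min α 2 - (d : ℝ))) * g (x - y)) -
                (∑' y : V d, g y) * (C₁ * bkt L x ^ (min α 2 - (d : ℝ)))| ≤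
              C * C₁ * C₃ * bkt L x ^ (min α 2 - (d : ℝ) - ρ') :=
  statement14_general d α ρ hα hdm hρ

end LongRange
end
end

section
/- Let α ∈ (0,2). For every u > 0 the double sum F(u) := ∑_{s=1}^∞ e^{−u s} ∑_{t=s}^∞ t^{−1−α/2} converges, and there is a constant C = C(α) < ∞ such that for all u ∈ (0,1]: |F(u) − (2/α)·Γ(1−α/2)·u^{α/2−1}| ≤ C, where Γ is the Gamma function. In particular F(u) = (2/α)Γ(1−α/2) u^{α/2−1}(1 + O(u^{1−α/2})) as u ↓ 0. -/
/-!
Write `p = α/2` and `G(s) = ∑_{t ≥ s} t^{-1-p}`. Comparing `G(s)` with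
`∫_s^∞ x^{-1-p} dx = s^{-p}/p` (the integrand is decreasing) gives
`s^{-p}/p ≤ G(s) ≤ s^{-1-p} + s^{-p}/p`, so `F(u)` lies between `A(u)/p` and `ζ(1+p) + A(u)/p`,
where `A(u) = ∑_{s ≥ 1} e^{-us} s^{-p}`. The summand of `A` is again decreasing, so `A(u)` differs
from `∫_0^∞ e^{-ux} x^{-p} dx = Γ(1-p) u^{p-1}` by at most `1` above and
`∫_0^1 x^{-p} dx = 1/(1-p)` below. The resulting bound holds for every `u > 0`.
-/

open scoped BigOperators

noncomputable section

namespace LongRange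

open Set MeasureTheory Real

theorem tsum_pnat_ge_eq_tsum_add {M : Type*} [AddCommMonoid M] [TopologicalSpace M]
    (g : ℕ → M) (s : ℕ+) :
    ∑' t : {t : ℕ+ // s ≤ t}, g t = ∑' n : ℕ, g (n + s) := by
  let e : ℕ ≃ {t : ℕ+ // s ≤ t} :=
    { toFun n := ⟨⟨n + s, by positivity⟩, PNat.coe_le_coe _ _ |>.1 (Nat.le_add_left _ _)⟩
      invFun t := t.1 - s
      left_inv n := by simp
      right_inv t := Subtype.ext <| PNat.eq <| Nat.sub_add_cancel t.2 }
  exact (e.tsum_eq (fun t => g t)).symm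

section IntegralTest

variable {f : ℝ → ℝ}

theorem summable_of_antitoneOn_Ioi_zero (anti : AntitoneOn f (Ioi 0))
    (hint : IntegrableOn f (Ioi 0)) (nonneg : ∀ x ∈ Ioi 0, 0 ≤ f x) :
    Summable fun n : ℕ => f n :=
  AntitoneOn.summable_of_integrableOn_Ioi (N := 1) (anti.mono (Ici_subset_Ioi.2 (by simp)))
    (hint.mono_set (Ioi_subset_Ioi (by simp)))
    (fun x hx => nonneg x (mem_Ioi.2 ((Nat.cast_nonneg _).trans_lt hx)))

theorem integral_Ioi_one_le_tsum_pnat (anti : AntitoneOn f (Ioi 0))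
    (hint : IntegrableOn f (Ioi 0)) (nonneg : ∀ x ∈ Ioi 0, 0 ≤ f x) :
    ∫ x in Ioi 1, f x ≤ ∑' s : ℕ+, f (s : ℕ) := by
  rw [tsum_pnat_eq_tsum_succ (f := fun n : ℕ => f n)]
  exact_mod_cast AntitoneOn.integral_le_tsum_comp_add 1 (anti.mono (Ici_subset_Ioi.2 (by simp)))
    (summable_of_antitoneOn_Ioi_zero anti hint nonneg)
    (fun x hx => nonneg x (mem_Ioi.2 ((Nat.cast_nonneg _).trans_lt hx)))

theorem tsum_pnat_le_add_integral_Ioi_one (anti : AntitoneOn f (Ioi 0))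
    (hint : IntegrableOn f (Ioi 0)) (nonneg : ∀ x ∈ Ioi 0, 0 ≤ f x) :
    ∑' s : ℕ+, f (s : ℕ) ≤ f 1 + ∫ x in Ioi 1, f x := by
  rw [tsum_pnat_eq_tsum_succ (f := fun n : ℕ => f n),
    ((summable_nat_add_iff 1).2
      (summable_of_antitoneOn_Ioi_zero anti hint nonneg)).tsum_eq_zero_add]
  have h := AntitoneOn.tsum_comp_add_le_integral 1 (anti.mono (Ici_subset_Ioi.2 (by simp)))
    (hint.mono_set (Ioi_subset_Ioi (by simp)))
    (fun x hx => nonneg x (mem_Ioi.2 ((Nat.cast_nonneg _).trans_lt hx)))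
  push_cast at h ⊢
  simpa using h

end IntegralTest

section Tail

variable {p : ℝ}

theorem integral_Ioi_rpow_neg_one_sub (hp : 0 < p) {c : ℝ} (hc : 0 < c) :
    ∫ x in Ioi c, x ^ (-1 - p) = p⁻¹ * c ^ (-p) := by
  rw [integral_Ioi_rpow_of_lt (by linarith) hc, show -1 - p + 1 = -p by ring, neg_div,
    div_neg, neg_neg, div_eq_inv_mul]

def tail (p : ℝ) (s : ℕ+) : ℝ := ∑' t : {t : ℕ+ // s ≤ t}, ((t.1 : ℕ) : ℝ) ^ (-1 - p)

theorem summable_natCast_rpow_neg_one_sub (hp : 0 < p) :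
    Summable fun n : ℕ => (n : ℝ) ^ (-1 - p) :=
  summable_nat_rpow.2 (by linarith)

theorem inv_mul_rpow_le_tail (hp : 0 < p) (s : ℕ+) :
    p⁻¹ * ((s : ℕ) : ℝ) ^ (-p) ≤ tail p s := by
  rw [tail, tsum_pnat_ge_eq_tsum_add (fun n : ℕ => (n : ℝ) ^ (-1 - p)),
    ← integral_Ioi_rpow_neg_one_sub hp (by positivity)]
  exact AntitoneOn.integral_le_tsum_comp_add s
    ((antitoneOn_rpow_Ioi_of_exponent_nonpos (by linarith)).mono (Ici_subset_Ioi.2 (by positivity)))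
    (summable_natCast_rpow_neg_one_sub hp)
    (fun x hx => rpow_nonneg ((Nat.cast_nonneg _).trans hx.le) _)

theorem tail_le (hp : 0 < p) (s : ℕ+) :
    tail p s ≤ ((s : ℕ) : ℝ) ^ (-1 - p) + p⁻¹ * ((s : ℕ) : ℝ) ^ (-p) := by
  have hs : (0 : ℝ) < (s : ℕ) := by positivity
  rw [tail, tsum_pnat_ge_eq_tsum_add (fun n : ℕ => (n : ℝ) ^ (-1 - p)),
    ((summable_nat_add_iff _).2 (summable_natCast_rpow_neg_one_sub hp)).tsum_eq_zero_add,
    ← integral_Ioi_rpow_neg_one_sub hp hs, zero_add]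
  gcongr
  simp_rw [add_right_comm _ 1 (s : ℕ)]
  exact AntitoneOn.tsum_comp_add_le_integral s
    ((antitoneOn_rpow_Ioi_of_exponent_nonpos (by linarith)).mono (Ici_subset_Ioi.2 hs))
    (integrableOn_Ioi_rpow_of_lt (by linarith) hs) (fun x hx => rpow_nonneg (hs.trans hx).le _)

end Tail

section Laplace

variable {p u : ℝ}

theorem exp_mul_rpow_nonneg : ∀ x ∈ Ioi (0 : ℝ), 0 ≤ exp (-u * x) * x ^ (-p) :=
  fun _ hx => mul_nonneg (exp_pos _).le (rpow_nonneg hx.le _)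

theorem integral_Ioi_exp_mul_rpow (hp : p < 1) (hu : 0 < u) :
    ∫ x in Ioi 0, exp (-u * x) * x ^ (-p) = Gamma (1 - p) * u ^ (p - 1) := by
  have h := integral_rpow_mul_exp_neg_mul_Ioi (a := 1 - p) (by linarith) hu
  rw [show 1 - p - 1 = -p by ring, one_div, inv_rpow hu.le, ← rpow_neg hu.le, neg_sub] at h
  rw [mul_comm, ← h]
  refine setIntegral_congr_fun measurableSet_Ioi fun x _ => ?_
  rw [mul_comm, neg_mul]

theorem integrableOn_Ioi_exp_mul_rpow (hp : p < 1) (hu : 0 < u) :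
    IntegrableOn (fun x => exp (-u * x) * x ^ (-p)) (Ioi 0) := by
  refine (integrableOn_rpow_mul_exp_neg_mul_rpow (s := -p) (p := 1) (by linarith) one_pos
    hu).congr_fun (fun x _ => ?_) measurableSet_Ioi
  simp only [rpow_one, mul_comm]

theorem antitoneOn_exp_mul_rpow (hp : 0 ≤ p) (hu : 0 ≤ u) :
    AntitoneOn (fun x => exp (-u * x) * x ^ (-p)) (Ioi 0) := fun x hx y hy hxy =>
  mul_le_mul (exp_le_exp.2 (by nlinarith)) (rpow_le_rpow_of_nonpos hx hxy (by linarith))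
    (rpow_nonneg hy.le _) (exp_pos _).le

theorem integral_Ioc_exp_mul_rpow_le (hp1 : p < 1) (hu : 0 < u) :
    ∫ x in Ioc 0 1, exp (-u * x) * x ^ (-p) ≤ (1 - p)⁻¹ := by
  have hint : IntegrableOn (fun x : ℝ => x ^ (-p)) (Ioc 0 1) :=
    (intervalIntegrable_iff_integrableOn_Ioc_of_le zero_le_one).1
      (intervalIntegral.intervalIntegrable_rpow' (by linarith))
  calc ∫ x in Ioc 0 1, exp (-u * x) * x ^ (-p)
      ≤ ∫ x in Ioc 0 1, x ^ (-p) :=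
        setIntegral_mono_on ((integrableOn_Ioi_exp_mul_rpow hp1 hu).mono_set Ioc_subset_Ioi_self)
          hint measurableSet_Ioc fun x hx =>
            mul_le_of_le_one_left (rpow_nonneg hx.1.le _) (exp_le_one_iff.2 (by nlinarith [hx.1]))
    _ = (1 - p)⁻¹ := by
      rw [← intervalIntegral.integral_of_le zero_le_one, integral_rpow (Or.inl (by linarith)),
        one_rpow, zero_rpow (by linarith), sub_zero, neg_add_eq_sub, one_div]

theorem gamma_mul_rpow_sub_le_tsum_exp_mul_rpow (hp0 : 0 ≤ p) (hp1 : p < 1) (hu : 0 < u) :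
    Gamma (1 - p) * u ^ (p - 1) - (1 - p)⁻¹ ≤
      ∑' s : ℕ+, exp (-u * (s : ℕ)) * ((s : ℕ) : ℝ) ^ (-p) := by
  have hint := integrableOn_Ioi_exp_mul_rpow hp1 hu
  have hsplit := setIntegral_union (Ioc_disjoint_Ioi le_rfl) measurableSet_Ioi
    (hint.mono_set Ioc_subset_Ioi_self) (hint.mono_set (Ioi_subset_Ioi zero_le_one))
  rw [Ioc_union_Ioi_eq_Ioi zero_le_one, integral_Ioi_exp_mul_rpow hp1 hu] at hsplit
  linarith [integral_Ioc_exp_mul_rpow_le hp1 hu, integral_Ioi_one_le_tsum_pnat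
    (antitoneOn_exp_mul_rpow hp0 hu.le) hint exp_mul_rpow_nonneg]

theorem tsum_exp_mul_rpow_le_one_add_gamma_mul_rpow (hp0 : 0 ≤ p) (hp1 : p < 1) (hu : 0 < u) :
    ∑' s : ℕ+, exp (-u * (s : ℕ)) * ((s : ℕ) : ℝ) ^ (-p) ≤ 1 + Gamma (1 - p) * u ^ (p - 1) := by
  have hint := integrableOn_Ioi_exp_mul_rpow hp1 hu
  have hmono : ∫ x in Ioi 1, exp (-u * x) * x ^ (-p) ≤ ∫ x in Ioi 0, exp (-u * x) * x ^ (-p) :=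
    setIntegral_mono_set hint
      ((ae_restrict_iff' measurableSet_Ioi).2 (ae_of_all _ exp_mul_rpow_nonneg))
      (Ioi_subset_Ioi zero_le_one).eventuallyLE
  have hfirst : exp (-u * 1) * (1 : ℝ) ^ (-p) ≤ 1 := by
    simp [exp_le_one_iff, hu.le]
  rw [integral_Ioi_exp_mul_rpow hp1 hu] at hmono
  linarith [tsum_pnat_le_add_integral_Ioi_one (antitoneOn_exp_mul_rpow hp0 hu.le) hint
    exp_mul_rpow_nonneg]

end Laplace

section WeightedTail

variable {p u : ℝ}

theorem exp_mul_tail_le (hp : 0 < p) (hu : 0 ≤ u) (s : ℕ+) :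
    exp (-u * (s : ℕ)) * tail p s ≤
      ((s : ℕ) : ℝ) ^ (-1 - p) + p⁻¹ * (exp (-u * (s : ℕ)) * ((s : ℕ) : ℝ) ^ (-p)) := by
  have he : exp (-u * (s : ℕ)) ≤ 1 :=
    exp_le_one_iff.2 (mul_nonpos_of_nonpos_of_nonneg (neg_nonpos.2 hu) (Nat.cast_nonneg _))
  calc exp (-u * (s : ℕ)) * tail p s
      ≤ exp (-u * (s : ℕ)) * (((s : ℕ) : ℝ) ^ (-1 - p) + p⁻¹ * ((s : ℕ) : ℝ) ^ (-p)) :=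
        mul_le_mul_of_nonneg_left (tail_le hp s) (exp_pos _).le
    _ = exp (-u * (s : ℕ)) * ((s : ℕ) : ℝ) ^ (-1 - p) +
          p⁻¹ * (exp (-u * (s : ℕ)) * ((s : ℕ) : ℝ) ^ (-p)) := by ring
    _ ≤ _ := by
      gcongr
      exact mul_le_of_le_one_left (rpow_nonneg (Nat.cast_nonneg _) _) he

theorem summable_exp_mul_rpow_pnat (hp0 : 0 ≤ p) (hp1 : p < 1) (hu : 0 < u) :
    Summable fun s : ℕ+ => exp (-u * (s : ℕ)) * ((s : ℕ) : ℝ) ^ (-p) :=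
  (summable_of_antitoneOn_Ioi_zero (antitoneOn_exp_mul_rpow hp0 hu.le)
    (integrableOn_Ioi_exp_mul_rpow hp1 hu) exp_mul_rpow_nonneg).comp_injective PNat.coe_injective

theorem summable_rpow_neg_one_sub_pnat (hp : 0 < p) :
    Summable fun s : ℕ+ => ((s : ℕ) : ℝ) ^ (-1 - p) :=
  (summable_natCast_rpow_neg_one_sub hp).comp_injective PNat.coe_injective

theorem summable_exp_mul_tail (hp0 : 0 < p) (hp1 : p < 1) (hu : 0 < u) :
    Summable fun s : ℕ+ => exp (-u * (s : ℕ)) * tail p s :=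
  ((summable_rpow_neg_one_sub_pnat hp0).add
    ((summable_exp_mul_rpow_pnat hp0.le hp1 hu).mul_left _)).of_nonneg_of_le
    (fun s => mul_nonneg (exp_pos _).le ((inv_mul_rpow_le_tail hp0 s).trans' (by positivity)))
    (exp_mul_tail_le hp0 hu.le)

theorem abs_tsum_exp_mul_tail_sub_le (hp0 : 0 < p) (hp1 : p < 1) (hu : 0 < u) :
    |∑' s : ℕ+, exp (-u * (s : ℕ)) * tail p s - p⁻¹ * Gamma (1 - p) * u ^ (p - 1)| ≤
      ∑' s : ℕ+, ((s : ℕ) : ℝ) ^ (-1 - p) + p⁻¹ * (1 + (1 - p)⁻¹) := by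
  have hA := summable_exp_mul_rpow_pnat hp0.le hp1 hu
  have hζ := summable_rpow_neg_one_sub_pnat hp0
  have hF := summable_exp_mul_tail hp0 hp1 hu
  have hupper := hF.tsum_le_tsum (exp_mul_tail_le hp0 hu.le) (hζ.add (hA.mul_left _))
  have hlower := (hA.mul_left p⁻¹).tsum_le_tsum (fun s => by
    rw [mul_left_comm]
    exact mul_le_mul_of_nonneg_left (inv_mul_rpow_le_tail hp0 s) (exp_pos _).le) hF
  rw [hζ.tsum_add (hA.mul_left _), tsum_mul_left] at hupper
  rw [tsum_mul_left] at hlower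
  have hinv : 0 < p⁻¹ := inv_pos.2 hp0
  have hA_upper := mul_le_mul_of_nonneg_left
    (tsum_exp_mul_rpow_le_one_add_gamma_mul_rpow hp0.le hp1 hu) hinv.le
  have hA_lower := mul_le_mul_of_nonneg_left
    (gamma_mul_rpow_sub_le_tsum_exp_mul_rpow hp0.le hp1 hu) hinv.le
  have : 0 ≤ p⁻¹ * (1 - p)⁻¹ := mul_nonneg hinv.le (inv_nonneg.2 (by linarith))
  rw [abs_le]
  constructor <;> linarith

end WeightedTail

/-- asymptotics of `F(u) = ∑_{s≥1} e^{−us} ∑_{t≥s} t^{−1−α/2}` as u ↓ 0. -/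
theorem statement17 (α : ℝ) (hα0 : 0 < α) (hα2 : α < 2) :
    (∀ u : ℝ, 0 < u →
      (∀ s : ℕ+, Summable (fun t : {t : ℕ+ // s ≤ t} =>
        (((t.1 : ℕ) : ℝ)) ^ (-1 - α / 2))) ∧
      Summable (fun s : ℕ+ => Real.exp (-u * ((s : ℕ) : ℝ)) *
        ∑' t : {t : ℕ+ // s ≤ t}, (((t.1 : ℕ) : ℝ)) ^ (-1 - α / 2))) ∧
    ∃ C : ℝ, 0 ≤ C ∧ ∀ u : ℝ, 0 < u → u ≤ 1 →
      |(∑' s : ℕ+, Real.exp (-u * ((s : ℕ) : ℝ)) *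
          ∑' t : {t : ℕ+ // s ≤ t}, (((t.1 : ℕ) : ℝ)) ^ (-1 - α / 2)) -
        (2 / α) * Real.Gamma (1 - α / 2) * u ^ (α / 2 - 1)| ≤ C := by
  have hp0 : 0 < α / 2 := by positivity
  have hp1 : α / 2 < 1 := by linarith
  refine ⟨fun u hu => ⟨fun s => ?_, summable_exp_mul_tail hp0 hp1 hu⟩,
    ∑' s : ℕ+, ((s : ℕ) : ℝ) ^ (-1 - α / 2) + (α / 2)⁻¹ * (1 + (1 - α / 2)⁻¹), ?_,
    fun u hu _ => ?_⟩
  · exact (summable_rpow_neg_one_sub_pnat hp0).comp_injective Subtype.coe_injective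
  · have : 0 < 1 - α / 2 := by linarith
    positivity
  · rw [← inv_div α 2]
    exact abs_tsum_exp_mul_tail_sub_le hp0 hp1 hu

end LongRange
end
end

section
/- Let d ≥ 1 be an integer and α > 0. There is a constant C = C(d,α) < ∞ such that for every σ > 0 and every x ∈ ℝ^d: ∑_{t=1}^∞ (d/(2πσ²t))^{d/2} · exp(−d|x|²/(2σ²t)) · t^{−1−α/2} ≤ C·σ^α·(max(|x|, σ))^{−d−α}. -/
/-!
Write `q = (d + α)/2 + 1`. The bound `(1 + v/q)^q ≤ e^v` turns the `t`-th term into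
`(d/2π)^{d/2} σ^{-d} (a + t)^{-q}` with `a = d|x|² / (2qσ²)`. Comparing the sum over `t` with
`∫ s^{-q} ds` bounds it by `(1 + 1/(q-1)) (1 + a)^{-(q-1)}`, and `1 + a` is at least a constant times
`(max(|x|, σ)/σ)²`.
-/

namespace LongRange

open Real Finset

lemma exp_neg_le_one_add_div_rpow_neg {v q : ℝ} (hv : 0 ≤ v) (hq : 0 < q) :
    exp (-v) ≤ (1 + v / q) ^ (-q) := by
  have hbase : 0 < 1 + v / q := by positivity
  have hpow : (1 + v / q) ^ q ≤ exp v := by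
    calc (1 + v / q) ^ q ≤ exp (v / q) ^ q := by
          gcongr; linarith [add_one_le_exp (v / q)]
      _ = exp v := by rw [← exp_mul, div_mul_cancel₀ v hq.ne']
  rw [exp_neg, rpow_neg hbase.le]
  exact inv_anti₀ (by positivity) hpow

lemma rpow_neg_mul_exp_neg_div_le {t a q : ℝ} (ht : 0 < t) (ha : 0 ≤ a) (hq : 0 < q) :
    t ^ (-q) * exp (-(q * a / t)) ≤ (t + a) ^ (-q) := by
  have hv : 0 ≤ q * a / t := by positivity
  calc t ^ (-q) * exp (-(q * a / t)) ≤ t ^ (-q) * (1 + q * a / t / q) ^ (-q) := by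
        gcongr
        exact exp_neg_le_one_add_div_rpow_neg hv hq
    _ = (t + a) ^ (-q) := by
        rw [show q * a / t / q = a / t by field_simp, ← mul_rpow ht.le (by positivity),
          mul_one_add, mul_div_cancel₀ a ht.ne']

lemma sum_range_add_succ_rpow_neg_le_div {c p : ℝ} (hc : 0 < c) (hp : 0 < p) (N : ℕ) :
    ∑ i ∈ range N, (c + (i + 1 : ℕ)) ^ (-(p + 1)) ≤ c ^ (-p) / p := by
  have hanti : AntitoneOn (fun x : ℝ => x ^ (-(p + 1))) (Set.Icc c (c + N)) :=
    (antitoneOn_rpow_Ioi_of_exponent_nonpos (by linarith)).mono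
      fun x hx => hc.trans_le hx.1
  have hzero : (0 : ℝ) ∉ Set.uIcc c (c + N) := by
    rw [Set.uIcc_of_le (by linarith [N.cast_nonneg (α := ℝ)])]
    exact fun h => hc.not_ge h.1
  calc ∑ i ∈ range N, (c + (i + 1 : ℕ)) ^ (-(p + 1))
      ≤ ∫ x in c..c + N, x ^ (-(p + 1)) := hanti.sum_le_integral
    _ = (c ^ (-p) - (c + N) ^ (-p)) / p := by
        rw [integral_rpow (Or.inr ⟨by linarith, hzero⟩), show -(p + 1) + 1 = -p by ring]
        field_simp
        ring
    _ ≤ c ^ (-p) / p := by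
        gcongr
        linarith [rpow_nonneg (show (0 : ℝ) ≤ c + N by positivity) (-p)]

lemma sum_range_add_succ_rpow_neg_le_mul {a p : ℝ} (ha : 0 ≤ a) (hp : 0 < p) (N : ℕ) :
    ∑ i ∈ range N, (a + (i + 1 : ℕ)) ^ (-(p + 1)) ≤ (1 + 1 / p) * (1 + a) ^ (-p) := by
  have hnonneg : ∀ i : ℕ, 0 ≤ (a + (i + 1 : ℕ)) ^ (-(p + 1)) := fun i => by positivity
  have hfirst : (1 + a) ^ (-(p + 1)) ≤ (1 + a) ^ (-p) :=
    rpow_le_rpow_of_exponent_le (by linarith) (by linarith)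
  have htail := sum_range_add_succ_rpow_neg_le_div (c := 1 + a) (by linarith) hp N
  calc ∑ i ∈ range N, (a + (i + 1 : ℕ)) ^ (-(p + 1))
      ≤ ∑ i ∈ range (N + 1), (a + (i + 1 : ℕ)) ^ (-(p + 1)) :=
        sum_le_sum_of_subset_of_nonneg (range_subset_range.2 N.le_succ) fun i _ _ => hnonneg i
    _ = (1 + a) ^ (-(p + 1)) + ∑ i ∈ range N, (1 + a + (i + 1 : ℕ)) ^ (-(p + 1)) := by
        rw [sum_range_succ']
        push_cast
        ring_nf
    _ ≤ (1 + 1 / p) * (1 + a) ^ (-p) := by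
        rw [add_mul, one_mul, one_div_mul_eq_div]
        gcongr

lemma one_add_mul_sq_rpow_neg_le {b p s : ℝ} (hb : 0 < b) (hp : 0 < p) :
    (1 + b * s ^ 2) ^ (-p) ≤ min b 1 ^ (-p) * max s 1 ^ (-(2 * p)) := by
  have hlow : min b 1 * max s 1 ^ 2 ≤ 1 + b * s ^ 2 := by
    rcases le_total s 1 with h | h
    · rw [max_eq_right h, one_pow, mul_one]
      nlinarith [min_le_right b 1, sq_nonneg s]
    · rw [max_eq_left h]
      nlinarith [min_le_left b 1, sq_nonneg s]
  calc (1 + b * s ^ 2) ^ (-p) ≤ (min b 1 * max s 1 ^ 2) ^ (-p) :=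
        rpow_le_rpow_of_nonpos (by positivity) hlow (by linarith)
    _ = min b 1 ^ (-p) * max s 1 ^ (-(2 * p)) := by
        rw [mul_rpow (by positivity) (by positivity), ← rpow_natCast, ← rpow_mul (by positivity)]
        push_cast
        ring_nf

lemma gaussian_weight_le {d α σ y t : ℝ} (hd : 0 ≤ d) (hq : 0 < (d + α) / 2 + 1) (hσ : 0 < σ)
    (ht : 0 < t) :
    (d / (2 * π * σ ^ 2 * t)) ^ (d / 2) * exp (-(d * y ^ 2) / (2 * σ ^ 2 * t)) *
        t ^ (-1 - α / 2) ≤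
      (d / (2 * π)) ^ (d / 2) * σ ^ (-d) *
        (d / (2 * ((d + α) / 2 + 1)) * (y / σ) ^ 2 + t) ^ (-((d + α) / 2 + 1)) := by
  set q := (d + α) / 2 + 1 with hq_def
  have hσ2 : (σ ^ 2) ^ (-(d / 2)) = σ ^ (-d) := by
    rw [← rpow_natCast, ← rpow_mul hσ.le]
    push_cast
    ring_nf
  have hscale : (d / (2 * π * σ ^ 2 * t)) ^ (d / 2) =
      (d / (2 * π)) ^ (d / 2) * σ ^ (-d) * t ^ (-(d / 2)) := by
    rw [show d / (2 * π * σ ^ 2 * t) = d / (2 * π) * (σ ^ 2)⁻¹ * t⁻¹ by field_simp,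
      mul_rpow (by positivity) (by positivity), mul_rpow (by positivity) (by positivity),
      inv_rpow (by positivity), inv_rpow ht.le, ← rpow_neg (by positivity), ← rpow_neg ht.le, hσ2]
  have htime : t ^ (-(d / 2)) * t ^ (-1 - α / 2) = t ^ (-q) := by
    rw [← rpow_add ht, hq_def]
    ring_nf
  have hexp : -(d * y ^ 2) / (2 * σ ^ 2 * t) = -(q * (d / (2 * q) * (y / σ) ^ 2) / t) := by
    field_simp
  calc (d / (2 * π * σ ^ 2 * t)) ^ (d / 2) * exp (-(d * y ^ 2) / (2 * σ ^ 2 * t)) *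
        t ^ (-1 - α / 2)
      = (d / (2 * π)) ^ (d / 2) * σ ^ (-d) *
          (t ^ (-q) * exp (-(q * (d / (2 * q) * (y / σ) ^ 2) / t))) := by
        rw [hscale, ← htime, hexp]
        ring
    _ ≤ _ := by
        rw [add_comm]
        gcongr
        exact rpow_neg_mul_exp_neg_div_le ht (by positivity) hq

lemma tsum_pnat_ofReal_le_of_sum_range_le {f : ℕ+ → ℝ} {B : ℝ} (hf : ∀ n, 0 ≤ f n)
    (h : ∀ N, ∑ i ∈ range N, f i.succPNat ≤ B) :
    ∑' t : ℕ+, ENNReal.ofReal (f t) ≤ ENNReal.ofReal B := by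
  rw [← Equiv.pnatEquivNat.symm.tsum_eq]
  refine ENNReal.tsum_le_of_sum_range_le fun N => ?_
  rw [← ENNReal.ofReal_sum_of_nonneg fun i _ => hf _]
  exact ENNReal.ofReal_le_ofReal (h N)

/-- Gaussian-sum estimate
`∑_{t≥1} (d/(2πσ²t))^{d/2} e^{−d|x|²/(2σ²t)} t^{−1−α/2} ≤ C σ^α max(|x|,σ)^{−d−α}`. -/
theorem statement19 (d : ℕ) (hd : 1 ≤ d) (α : ℝ) (hα : 0 < α) :
    ∃ C : ℝ, 0 ≤ C ∧ ∀ σ : ℝ, 0 < σ → ∀ x : EuclideanSpace ℝ (Fin d),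
      (∑' t : ℕ+, ENNReal.ofReal
          (((d : ℝ) / (2 * Real.pi * σ ^ 2 * ((t : ℕ) : ℝ))) ^ ((d : ℝ) / 2) *
            Real.exp (-((d : ℝ) * ‖x‖ ^ 2) / (2 * σ ^ 2 * ((t : ℕ) : ℝ))) *
            (((t : ℕ) : ℝ)) ^ (-1 - α / 2))) ≤
        ENNReal.ofReal (C * σ ^ α * max ‖x‖ σ ^ (-(d : ℝ) - α)) := by
  have hd0 : (0 : ℝ) < d := by exact_mod_cast hd
  set p := ((d : ℝ) + α) / 2 with hp_def
  have hp : 0 < p := by positivity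
  set b := (d : ℝ) / (2 * (p + 1))
  have hb : 0 < b := by positivity
  set K := ((d : ℝ) / (2 * π)) ^ ((d : ℝ) / 2)
  refine ⟨K * (1 + 1 / p) * min b 1 ^ (-p), by positivity, fun σ hσ x => ?_⟩
  set r := ‖x‖ / σ
  have hrescale :
      σ ^ (-(d : ℝ)) * max r 1 ^ (-(2 * p)) = σ ^ α * max ‖x‖ σ ^ (-(d : ℝ) - α) := by
    rw [show max r 1 = max ‖x‖ σ / σ by rw [← max_div_div_right hσ.le, div_self hσ.ne'],
      div_rpow (by positivity) hσ.le, show -(2 * p) = -(d : ℝ) - α by rw [hp_def]; ring,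
      mul_div_left_comm, ← rpow_sub hσ]
    ring_nf
  refine tsum_pnat_ofReal_le_of_sum_range_le (fun n => by positivity) fun N =>
    (sum_le_sum fun i _ => gaussian_weight_le hd0.le (by positivity) hσ (by positivity)).trans ?_
  rw [← mul_sum]
  calc _ ≤ K * σ ^ (-(d : ℝ)) * ((1 + 1 / p) * (1 + b * r ^ 2) ^ (-p)) := by
        gcongr
        exact sum_range_add_succ_rpow_neg_le_mul (by positivity) hp N
    _ ≤ K * σ ^ (-(d : ℝ)) * ((1 + 1 / p) * (min b 1 ^ (-p) * max r 1 ^ (-(2 * p)))) := by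
        gcongr
        exact one_add_mul_sq_rpow_neg_le hb hp
    _ = K * (1 + 1 / p) * min b 1 ^ (-p) * σ ^ α * max ‖x‖ σ ^ (-(d : ℝ) - α) := by
        rw [mul_assoc _ (σ ^ α), ← hrescale]
        ring

end LongRange
end
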